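/- For every z > 0, b(z) := ∫₀^∞ √(s² + z²) · s · e^{−s²/2} ds equals e^{z²/2} · √(π/2) · erfc(z/√2) + z. -/

import Mathlib

/-!
The substitution `v = √(s² + z²)`, for which `s ds = v dv`, turns `b(z)` into
`e^{z²/2} ∫_z^∞ v² e^{-v²/2} dv`. Integrating by parts against `-v e^{-v²/2}`, whose derivative
is `(v² - 1) e^{-v²/2}`, gives `z e^{-z²/2} + ∫_z^∞ e^{-v²/2} dv`, and the scaling `v = √2 t`
identifies the remaining Gaussian tail with `√(π/2) erfc(z/√2)`.
-/

open MeasureTheory Real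

/-- The complementary error function `erfc(x) = (2/√π) ∫ₓ^∞ e^{−t²} dt`. -/
noncomputable def erfc (x : ℝ) : ℝ :=
  (2 / Real.sqrt Real.pi) * ∫ t in Set.Ioi x, Real.exp (-t ^ 2)

open Set Filter Topology

lemma image_sqrt_sq_add_sq_Ioi {z : ℝ} (hz : 0 ≤ z) :
    (fun s : ℝ => √(s ^ 2 + z ^ 2)) '' Ioi 0 = Ioi z := by
  ext v
  constructor
  · rintro ⟨s, hs : 0 < s, rfl⟩
    exact lt_sqrt_of_sq_lt (by nlinarith)
  · rintro (hzv : z < v)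
    refine ⟨√(v ^ 2 - z ^ 2), sqrt_pos.mpr (by nlinarith), ?_⟩
    dsimp only
    rw [sq_sqrt (by nlinarith), sub_add_cancel, sqrt_sq (by linarith)]

lemma strictMonoOn_sqrt_sq_add_sq (z : ℝ) :
    StrictMonoOn (fun s : ℝ => √(s ^ 2 + z ^ 2)) (Ici 0) := fun a ha b _ hab =>
  sqrt_lt_sqrt (by positivity) (by gcongr)

theorem integral_Ioi_comp_sqrt_sq_add_sq_mul (g : ℝ → ℝ) {z : ℝ} (hz : 0 ≤ z) :
    ∫ s in Ioi 0, g √(s ^ 2 + z ^ 2) * s = ∫ v in Ioi z, v * g v := by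
  have hderiv : ∀ s ∈ Ioi (0 : ℝ),
      HasDerivWithinAt (fun s => √(s ^ 2 + z ^ 2)) (s / √(s ^ 2 + z ^ 2)) (Ioi 0) s := by
    intro s (hs : 0 < s)
    have h := ((hasDerivAt_pow 2 s).add_const (z ^ 2)).sqrt (by positivity)
    exact (h.congr_deriv (by simp; field_simp)).hasDerivWithinAt
  rw [← image_sqrt_sq_add_sq_Ioi hz, integral_image_eq_integral_abs_deriv_smul measurableSet_Ioi
    hderiv ((strictMonoOn_sqrt_sq_add_sq z).injOn.mono Ioi_subset_Ici_self)]
  refine setIntegral_congr_fun measurableSet_Ioi fun s (hs : 0 < s) => ?_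
  have hr : 0 < √(s ^ 2 + z ^ 2) := by positivity
  rw [smul_eq_mul, abs_of_pos (by positivity)]
  field_simp

lemma tendsto_mul_exp_neg_mul_sq_atTop {b : ℝ} (hb : 0 < b) :
    Tendsto (fun v : ℝ => v * exp (-b * v ^ 2)) atTop (𝓝 0) := by
  refine ((tendsto_rpow_abs_mul_exp_neg_mul_sq_cocompact hb 1).mono_left
    atTop_le_cocompact).congr' ?_
  filter_upwards [eventually_ge_atTop 0] with v hv
  rw [rpow_one, abs_of_nonneg hv]

lemma integrable_sq_mul_exp_neg_mul_sq {b : ℝ} (hb : 0 < b) :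
    Integrable fun v : ℝ => v ^ 2 * exp (-b * v ^ 2) := by
  simpa using integrable_rpow_mul_exp_neg_mul_sq hb (by norm_num : (-1 : ℝ) < 2)

theorem integral_Ioi_sq_mul_exp_neg_mul_sq {b : ℝ} (hb : 0 < b) (z : ℝ) :
    2 * b * ∫ v in Ioi z, v ^ 2 * exp (-b * v ^ 2) =
      z * exp (-b * z ^ 2) + ∫ v in Ioi z, exp (-b * v ^ 2) := by
  have hderiv : ∀ v ∈ Ici z, HasDerivAt (fun v => -(v * exp (-b * v ^ 2)))
      ((2 * b * v ^ 2 - 1) * exp (-b * v ^ 2)) v := by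
    intro v _
    refine ((hasDerivAt_id v).mul ((hasDerivAt_pow 2 v).const_mul (-b)).exp).neg.congr_deriv ?_
    simp only [id_eq, Nat.cast_ofNat]
    ring
  have hint : IntegrableOn (fun v => (2 * b * v ^ 2 - 1) * exp (-b * v ^ 2)) (Ioi z) := by
    refine (((integrable_sq_mul_exp_neg_mul_sq hb).const_mul (2 * b)).sub
      (integrable_exp_neg_mul_sq hb)).integrableOn.congr_fun (fun v _ => ?_) measurableSet_Ioi
    simp only [Pi.sub_apply]
    ring
  have hftc := integral_Ioi_of_hasDerivAt_of_tendsto' hderiv hint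
    (tendsto_mul_exp_neg_mul_sq_atTop hb).neg
  calc 2 * b * ∫ v in Ioi z, v ^ 2 * exp (-b * v ^ 2)
      = ∫ v in Ioi z, ((2 * b * v ^ 2 - 1) * exp (-b * v ^ 2) + exp (-b * v ^ 2)) := by
        rw [← integral_const_mul]
        congr with v
        ring
    _ = z * exp (-b * z ^ 2) + ∫ v in Ioi z, exp (-b * v ^ 2) := by
        rw [integral_add hint (integrable_exp_neg_mul_sq hb).integrableOn, hftc]
        ring

theorem integral_Ioi_exp_neg_mul_sq {b : ℝ} (hb : 0 < b) (z : ℝ) :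
    ∫ v in Ioi z, exp (-b * v ^ 2) = √(π / b) / 2 * erfc (√b * z) := by
  have hscale := integral_comp_mul_left_Ioi (fun t => exp (-t ^ 2)) z (sqrt_pos.mpr hb)
  simp only [mul_pow, sq_sqrt hb.le] at hscale
  simp_rw [neg_mul]
  rw [hscale, smul_eq_mul, erfc, sqrt_div' _ hb.le]
  have : 0 < √π := sqrt_pos.mpr pi_pos
  field_simp

theorem integral_Ioi_sqrt_sq_add_sq_mul_mul_exp (b : ℝ) {z : ℝ} (hz : 0 ≤ z) :
    ∫ s in Ioi 0, √(s ^ 2 + z ^ 2) * s * exp (-b * s ^ 2) =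
      exp (b * z ^ 2) * ∫ v in Ioi z, v ^ 2 * exp (-b * v ^ 2) := by
  have hsubst := integral_Ioi_comp_sqrt_sq_add_sq_mul
    (fun v => exp (b * z ^ 2) * (v * exp (-b * v ^ 2))) hz
  rw [← integral_const_mul]
  convert hsubst using 1
  · refine setIntegral_congr_fun measurableSet_Ioi fun s _ => ?_
    have hexp : exp (b * z ^ 2) * exp (-b * (s ^ 2 + z ^ 2)) = exp (-b * s ^ 2) := by
      rw [← exp_add]
      ring_nf
    rw [sq_sqrt (by positivity)]
    linear_combination -(√(s ^ 2 + z ^ 2) * s) * hexp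
  · congr with v
    ring

/-- For `z > 0`, `b(z) = ∫₀^∞ √(s²+z²) s e^{−s²/2} ds = e^{z²/2} √(π/2) erfc(z/√2) + z`. -/
theorem b_eq_erfc_add (z : ℝ) (hz : 0 < z) :
    (∫ s in Set.Ioi (0:ℝ), Real.sqrt (s ^ 2 + z ^ 2) * s * Real.exp (-s ^ 2 / 2)) =
      Real.exp (z ^ 2 / 2) * Real.sqrt (Real.pi / 2) * erfc (z / Real.sqrt 2) + z := by
  have hb : (0 : ℝ) < 1 / 2 := by norm_num
  have hparts := integral_Ioi_sq_mul_exp_neg_mul_sq hb z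
  have hcoeff : √(π / (1 / 2)) / 2 = √(π / 2) := by
    rw [show π / (1 / 2) = 2 ^ 2 * (π / 2) by ring, sqrt_mul (by positivity), sqrt_sq zero_le_two]
    ring
  have harg : √(1 / 2) * z = z / √2 := by
    rw [one_div, sqrt_inv, inv_mul_eq_div]
  have hexp : exp (1 / 2 * z ^ 2) * exp (-(1 / 2) * z ^ 2) = 1 := by
    rw [← exp_add, show 1 / 2 * z ^ 2 + -(1 / 2) * z ^ 2 = 0 by ring, exp_zero]
  rw [integral_Ioi_exp_neg_mul_sq hb, hcoeff, harg] at hparts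
  simp_rw [show ∀ s : ℝ, -s ^ 2 / 2 = -(1 / 2) * s ^ 2 from fun s => by ring,
    show z ^ 2 / 2 = 1 / 2 * z ^ 2 by ring]
  rw [integral_Ioi_sqrt_sq_add_sq_mul_mul_exp _ hz.le]
  linear_combination exp (1 / 2 * z ^ 2) * hparts + z * hexp
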